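/- Let x, y be nonnegative integers and n a positive integer with x + y ≤ 2^n, y ≥ 2^{n-1}, and y ≤ 2^{n-1} + x. Then F(x+y) - F(y) - F(x) - y + 2^{n-1} ≥ x. -/
import Mathlib


open Finset

/-- Number of edges of the hypercube graph `Q_n` with both endpoints in `A`
(ordered pairs counted, then halved). -/
def edgeCount {n : ℕ} (A : Finset (Finset (Fin n))) : ℕ :=
  ((A ×ˢ A).filter (fun p => (symmDiff p.1 p.2).card = 1)).card / 2

/-- Number of edges of `Q_n` with exactly one endpoint in `A` (the edge boundary). -/
def edgeBoundary {n : ℕ} (A : Finset (Finset (Fin n))) : ℕ :=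
  ((A ×ˢ Aᶜ).filter (fun p => (symmDiff p.1 p.2).card = 1)).card

/-- Number of edges of `Q_n` with one endpoint in `X` and the other in `Y`. -/
def edgesBetween {n : ℕ} (X Y : Finset (Finset (Fin n))) : ℕ :=
  ((X ×ˢ Y).filter (fun p => (symmDiff p.1 p.2).card = 1)).card

/-- The antipodal image of a family: pointwise complementation in `[n]`. -/
def barFam {n : ℕ} (A : Finset (Finset (Fin n))) : Finset (Finset (Fin n)) :=
  A.image (fun x => xᶜ)

/-- Pointwise complementation within a ground set `s`. -/
def barOn {n : ℕ} (s : Finset (Fin n)) (A : Finset (Finset (Fin n))) :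
    Finset (Finset (Fin n)) :=
  A.image (fun x => s \ x)

/-- The upper `i`-section of `A`, as a family of subsets of `[n] \ {i}`. -/
def secUp {n : ℕ} (A : Finset (Finset (Fin n))) (i : Fin n) : Finset (Finset (Fin n)) :=
  Finset.univ.filter (fun x => i ∉ x ∧ insert i x ∈ A)

/-- The lower `i`-section of `A`, as a family of subsets of `[n] \ {i}`. -/
def secDown {n : ℕ} (A : Finset (Finset (Fin n))) (i : Fin n) : Finset (Finset (Fin n)) :=
  Finset.univ.filter (fun x => i ∉ x ∧ x ∈ A)

/-- The value of a subset of `[n]` in the binary ordering. -/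
def setToNat {n : ℕ} (x : Finset (Fin n)) : ℕ := ∑ i ∈ x, 2 ^ (i : ℕ)

/-- The initial segment of size `k` of the binary ordering on subsets of `[n]`
(for `k ≤ 2^n`). -/
def iseg (n k : ℕ) : Finset (Finset (Fin n)) :=
  Finset.univ.filter (fun x => setToNat x < k)

/-- `F k`: the number of hypercube edges induced by the initial segment of size `k`
of the binary ordering; equals the sum of binary digit sums of `0, …, k-1`. -/
def binF (k : ℕ) : ℕ := ∑ i ∈ Finset.range k, (Nat.digits 2 i).sum

/-- The subcube of subsets of `[n]` contained in the first `d` coordinates. -/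
def subcube (n d : ℕ) : Finset (Finset (Fin n)) :=
  Finset.univ.filter (fun x => ∀ i ∈ x, (i : ℕ) < d)


lemma ds_two_mul (a : ℕ) : (Nat.digits 2 (2 * a)).sum = (Nat.digits 2 a).sum := by
  rcases Nat.eq_zero_or_pos a with rfl | ha
  · simp
  · rw [Nat.digits_def' (by norm_num) (by omega)]
    simp [Nat.mul_div_cancel_left, Nat.mul_mod_right]

lemma ds_two_mul_add_one (a : ℕ) :
    (Nat.digits 2 (2 * a + 1)).sum = (Nat.digits 2 a).sum + 1 := by
  rw [Nat.digits_def' (by norm_num) (by omega)]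
  have h1 : (2 * a + 1) % 2 = 1 := by omega
  have h2 : (2 * a + 1) / 2 = a := by omega
  rw [h1, h2]
  simp [Nat.add_comm]

lemma binF_succ (k : ℕ) : binF (k + 1) = binF k + (Nat.digits 2 k).sum := by
  simp [binF, Finset.sum_range_succ]

lemma binF_two_mul (a : ℕ) : binF (2 * a) = 2 * binF a + a := by
  induction a with
  | zero => simp [binF]
  | succ a ih =>
    have : 2 * (a + 1) = (2 * a + 1) + 1 := by ring
    rw [this, binF_succ, binF_succ, ih, ds_two_mul, ds_two_mul_add_one, binF_succ]
    ring

lemma binF_two_mul_add_one (a : ℕ) :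
    binF (2 * a + 1) = binF a + binF (a + 1) + a := by
  rw [binF_succ, binF_two_mul, ds_two_mul, binF_succ]
  ring

lemma binF_pow_add : ∀ k m : ℕ, m ≤ 2 ^ k →
    binF (2 ^ k + m) = binF (2 ^ k) + binF m + m := by
  intro k
  induction k with
  | zero =>
    intro m hm
    interval_cases m
    · simp [binF]
    · simp [binF, Finset.sum_range_succ]
  | succ k ih =>
    intro m hm
    rcases Nat.even_or_odd m with ⟨b, hb⟩ | ⟨b, hb⟩
    · have hb' : b ≤ 2 ^ k := by rw [pow_succ] at hm; omega
      have e1 : 2 ^ (k + 1) + m = 2 * (2 ^ k + b) := by rw [pow_succ]; omega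
      have e2 : 2 ^ (k + 1) = 2 * 2 ^ k := by rw [pow_succ]; ring
      have e3 : m = 2 * b := by omega
      rw [e1, e3, e2, binF_two_mul, binF_two_mul, binF_two_mul, ih b hb']
      omega
    · have hb' : b + 1 ≤ 2 ^ k := by rw [pow_succ] at hm; omega
      have e1 : 2 ^ (k + 1) + m = 2 * (2 ^ k + b) + 1 := by rw [pow_succ]; omega
      have e2 : 2 ^ (k + 1) = 2 * 2 ^ k := by rw [pow_succ]; ring
      have e3 : m = 2 * b + 1 := by omega
      have e4 : 2 ^ k + b + 1 = 2 ^ k + (b + 1) := by ring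
      rw [e1, e3, e2, binF_two_mul_add_one, binF_two_mul, binF_two_mul_add_one,
        ih b (by omega), e4, ih (b + 1) hb']
      omega

lemma binF_hart : ∀ x : ℕ, ∀ m ≤ x, binF x + binF m + m ≤ binF (x + m) := by
  intro x
  induction x using Nat.strong_induction_on with
  | _ x ih =>
    intro m hm
    rcases Nat.even_or_odd x with ⟨a, hx⟩ | ⟨a, hx⟩ <;>
      rcases Nat.even_or_odd m with ⟨b, hb⟩ | ⟨b, hb⟩
    · -- x = 2a, m = 2b
      rcases Nat.eq_zero_or_pos a with rfl | ha
      · have : m = 0 := by omega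
        subst this; simp [show x = 0 by omega, show binF 0 = 0 from rfl]
      · have hx2 : x = 2 * a := by omega
        have hm2 : m = 2 * b := by omega
        have key := ih a (by omega) b (by omega)
        rw [hx2, hm2, show 2 * a + 2 * b = 2 * (a + b) by ring,
          binF_two_mul, binF_two_mul, binF_two_mul]
        omega
    · -- x = 2a, m = 2b+1
      have ha : 0 < a := by omega
      have hx2 : x = 2 * a := by omega
      have hm2 : m = 2 * b + 1 := by omega
      have hba : b + 1 ≤ a := by omega
      have k1 := ih a (by omega) b (by omega)
      have k2 := ih a (by omega) (b + 1) hba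
      rw [hx2, hm2, show 2 * a + (2 * b + 1) = 2 * (a + b) + 1 by ring,
        binF_two_mul, binF_two_mul_add_one, binF_two_mul_add_one,
        show a + b + 1 = a + (b + 1) by ring]
      omega
    · -- x = 2a+1, m = 2b
      have hx2 : x = 2 * a + 1 := by omega
      have hm2 : m = 2 * b := by omega
      rcases Nat.eq_zero_or_pos a with rfl | ha
      · have : m = 0 := by omega
        subst this; simp [show x = 1 by omega, show binF 0 = 0 from rfl]
      · have k1 := ih a (by omega) b (by omega)
        have k2 := ih (a + 1) (by omega) b (by omega)
        rw [hx2, hm2, show 2 * a + 1 + 2 * b = 2 * (a + b) + 1 by ring,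
          binF_two_mul_add_one, binF_two_mul_add_one, binF_two_mul,
          show a + b + 1 = a + 1 + b by ring]
        omega
    · -- x = 2a+1, m = 2b+1
      have hx2 : x = 2 * a + 1 := by omega
      have hm2 : m = 2 * b + 1 := by omega
      have hba : b ≤ a := by omega
      rcases eq_or_lt_of_le hba with rfl | hlt
      · rw [hx2, hm2, show 2 * b + 1 + (2 * b + 1) = 2 * (2 * b + 1) by ring,
          binF_two_mul]
        omega
      · have ha : 0 < a := by omega
        have k1 := ih (a + 1) (by omega) b (by omega)
        have k2 := ih a (by omega) (b + 1) (by omega)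
        rw [hx2, hm2, show 2 * a + 1 + (2 * b + 1) = 2 * (a + b + 1) by ring,
          binF_two_mul, binF_two_mul_add_one, binF_two_mul_add_one]
        simp only [show a + 1 + b = a + b + 1 by ring] at k1
        simp only [show a + (b + 1) = a + b + 1 by ring] at k2
        omega

theorem stmt3 (x y n : ℕ) (hn : 0 < n) (h1 : x + y ≤ 2 ^ n)
    (h2 : 2 ^ (n - 1) ≤ y) (h3 : y ≤ 2 ^ (n - 1) + x) :
    binF x + binF y + y + x ≤ binF (x + y) + 2 ^ (n - 1) := by
  set k := n - 1 with hk
  have h2n : 2 ^ n = 2 * 2 ^ k := by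
    rw [hk, ← pow_succ']
    congr 1
    omega
  set m := y - 2 ^ k with hmdef
  have hy : y = 2 ^ k + m := by omega
  have hmx : m ≤ x := by omega
  have hxm : x + m ≤ 2 ^ k := by omega
  have e1 : binF y = binF (2 ^ k) + binF m + m := by
    rw [hy]; exact binF_pow_add k m (by omega)
  have e2 : binF (x + y) = binF (2 ^ k) + binF (x + m) + (x + m) := by
    rw [show x + y = 2 ^ k + (x + m) by omega]
    exact binF_pow_add k (x + m) hxm
  have hart := binF_hart x m hmx
  omega
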